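/- In a stable instance, a good solution has few non-pure clusters: let n := |D| ≥ 3, ε ∈ (0, 1/150], and k ≥ 2 with k ≤ |F|, and suppose the instance is (ε/ln n)-stable, i.e., opt_{k−1} ≥ (1 + ε/ln n)·opt_k. Let OPT ⊆ F with |OPT| = k and cost(OPT) = opt_k, let S ⊆ F with |S| = k and cost(S) ≤ 5·opt_k, and fix assignments σ_OPT for OPT and σ_S for S. For o ∈ OPT write C*_o := σ_OPT⁻¹(o) and for c ∈ S write C'_c := σ_S⁻¹(c); the cluster C*_o is called pure (with respect to S) if there exists c ∈ S with |C'_c Δ C*_o| ≤ 3ε·min(|C*_o|, |C'_c|). Then the number of centers o ∈ OPT whose cluster C*_o is not pure is at most (ln n)/ε³. -/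

import Mathlib

open Finset

/-- `d(p,S)`: distance from `p` to the closest point of `S` (junk `0` if `S = ∅`). -/
noncomputable def dS {X : Type*} [MetricSpace X] (p : X) (S : Finset X) : ℝ :=
  if h : S.Nonempty then S.inf' h (fun c => dist p c) else 0

/-- `cost(S) = Σ_{p∈D} d(p,S)`. -/
noncomputable def kmCost {X : Type*} [MetricSpace X] (D S : Finset X) : ℝ :=
  ∑ p ∈ D, dS p S

/-- `opt_k = min{cost(T) : T ⊆ F, |T| = k}`. -/
noncomputable def kmOpt {X : Type*} [MetricSpace X] (D F : Finset X) (k : ℕ) : ℝ :=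
  sInf {c : ℝ | ∃ T : Finset X, T ⊆ F ∧ T.card = k ∧ kmCost D T = c}

/-- The cluster of center `o` under assignment `σ`. -/
def cluster {X : Type*} [DecidableEq X] (D : Finset X) (σ : X → X) (o : X) : Finset X :=
  D.filter (fun p => σ p = o)

/-- The cluster of `o ∈ OPT` is pure (w.r.t. `S`) if some cluster of `S` agrees with it
up to `3ε·min` of the cluster sizes. -/
def IsPure {X : Type*} [DecidableEq X] (D S : Finset X) (σS σO : X → X) (ε : ℝ)
    (o : X) : Prop :=
  ∃ c ∈ S, ((symmDiff (cluster D σS c) (cluster D σO o)).card : ℝ)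
    ≤ 3 * ε * min ((cluster D σO o).card : ℝ) ((cluster D σS c).card : ℝ)

/-! Removing a center `o` of `OPT` and sending its cluster to the nearest other center `t`
costs at most `|C*_o| · r_o` with `r_o = d(o, t)`, so stability gives
`|C*_o| · r_o ≥ (ε / ln n) · opt_k`. Call `c ∈ S` near `o` if `d(c, o) < r_o / 2`; every
center of `S` is near at most one `o`. A client of `C*_o` served by a center not near `o`, and
a client outside `C*_o` served by a center near `o`, both pay at least `r_o / 2` in
`d(p, σ_S p) + d(p, σ_OPT p)`; each client is charged by at most two centers `o`, so the total
charge is at most `2 (cost S + opt_k) ≤ 12 opt_k`. A non-pure cluster with at most one near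
center, and a cluster with none, is charged at least `ε |C*_o| · r_o ≥ ε² opt_k / ln n`, so
there are at most `12 ln n / ε²` of them, and by pigeonhole the clusters with two or more near
centers are at most as many as those with none. When `opt_k = 0` all clusters are pure. -/

lemma cluster_eq_ite_of_eq_self {X : Type*} [DecidableEq X] {D : Finset X} {σ : X → X}
    (hσ : ∀ p ∈ D, σ p = p) (o : X) : cluster D σ o = if o ∈ D then {o} else ∅ := by
  rw [cluster, filter_congr fun p hp => by rw [hσ p hp], filter_eq']

lemma sum_sum_le_sum_of_pairwiseDisjoint {ι α : Type*} [DecidableEq α] {s : Finset ι}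
    {D : Finset α} {P : ι → Finset α} {w : α → ℝ} (hP : (s : Set ι).PairwiseDisjoint P)
    (hPD : ∀ i ∈ s, P i ⊆ D) (hw : ∀ a ∈ D, 0 ≤ w a) :
    ∑ i ∈ s, ∑ a ∈ P i, w a ≤ ∑ a ∈ D, w a := by
  rw [← sum_biUnion hP]
  exact sum_le_sum_of_subset_of_nonneg (biUnion_subset.mpr hPD) fun a ha _ => hw a ha

lemma sum_symmDiff_le_add {α : Type*} [DecidableEq α] {A B : Finset α} {w : α → ℝ}
    (hw : ∀ a ∈ A ∪ B, 0 ≤ w a) :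
    ∑ a ∈ symmDiff A B, w a ≤ ∑ a ∈ A, w a + ∑ a ∈ B, w a := by
  rw [← sum_union_inter]
  linarith [sum_le_sum_of_subset_of_nonneg symmDiff_subset_union fun a ha _ => hw a ha,
    sum_nonneg fun a ha => hw a (inter_subset_union ha)]

lemma card_filter_two_le_le_card_filter_eq_zero {ι : Type*} (s : Finset ι) (f : ι → ℕ)
    (hf : ∑ i ∈ s, f i ≤ s.card) : #{i ∈ s | 2 ≤ f i} ≤ #{i ∈ s | f i = 0} := by
  have key : s.card + #{i ∈ s | 2 ≤ f i} ≤ ∑ i ∈ s, f i + #{i ∈ s | f i = 0} := by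
    rw [card_filter, card_filter, card_eq_sum_ones, ← sum_add_distrib, ← sum_add_distrib]
    exact sum_le_sum fun i _ => by split_ifs <;> omega
  omega

lemma two_mul_card_le_card_symmDiff {α : Type*} [DecidableEq α] {A C : Finset α} {ε : ℝ}
    (hε0 : 0 ≤ ε) (hε : ε ≤ 1 / 6)
    (h : 3 * ε * min (A.card : ℝ) C.card < (symmDiff C A).card) :
    2 * ε * A.card ≤ (symmDiff C A).card := by
  have hΔ : ((symmDiff C A).card : ℝ) = (C \ A).card + (A \ C).card := by
    rw [symmDiff_def, ← Nat.cast_add]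
    exact congrArg _ (card_union_of_disjoint disjoint_sdiff_sdiff)
  have hA : (A.card : ℝ) = (A \ C).card + (A ∩ C).card := by
    rw [← Nat.cast_add, card_sdiff_add_card_inter]
  have hmin : ((A ∩ C).card : ℝ) ≤ min (A.card : ℝ) C.card :=
    le_min (mod_cast card_le_card inter_subset_left) (mod_cast card_le_card inter_subset_right)
  have := mul_le_mul_of_nonneg_left hmin hε0
  have : 0 ≤ (1 / 6 - ε) * (A \ C).card := mul_nonneg (by linarith) (Nat.cast_nonneg _)
  nlinarith [Nat.cast_nonneg (α := ℝ) (C \ A).card]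

section KMedian

variable {X : Type*} [MetricSpace X]

lemma dS_nonneg (p : X) (S : Finset X) : 0 ≤ dS p S := by
  unfold dS
  split
  · exact le_inf' _ _ fun _ _ => dist_nonneg
  · exact le_rfl

lemma dS_le_dist {p c : X} {S : Finset X} (hc : c ∈ S) : dS p S ≤ dist p c := by
  rw [dS, dif_pos ⟨c, hc⟩]
  exact inf'_le _ hc

lemma exists_mem_dS_eq_dist (p : X) {S : Finset X} (hS : S.Nonempty) :
    ∃ c ∈ S, dS p S = dist p c := by
  rw [dS, dif_pos hS]
  exact exists_mem_eq_inf' hS _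

lemma kmCost_nonneg (D S : Finset X) : 0 ≤ kmCost D S :=
  sum_nonneg fun p _ => dS_nonneg p S

lemma kmOpt_le_kmCost {D F T : Finset X} {k : ℕ} (hTF : T ⊆ F) (hT : T.card = k) :
    kmOpt D F k ≤ kmCost D T :=
  csInf_le ⟨0, fun _ ⟨T', _, _, hc⟩ => hc ▸ kmCost_nonneg D T'⟩ ⟨T, hTF, hT, rfl⟩

lemma kmCost_eq_sum_dist {D T : Finset X} {σ : X → X}
    (hσ : ∀ p ∈ D, dist p (σ p) = dS p T) : kmCost D T = ∑ p ∈ D, dist p (σ p) :=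
  sum_congr rfl fun p hp => (hσ p hp).symm

lemma eq_self_of_kmCost_eq_zero {D T : Finset X} {σ : X → X}
    (hσ : ∀ p ∈ D, dist p (σ p) = dS p T) (h0 : kmCost D T = 0) : ∀ p ∈ D, σ p = p := by
  rw [kmCost_eq_sum_dist hσ, sum_eq_zero_iff_of_nonneg fun _ _ => dist_nonneg] at h0
  exact fun p hp => (dist_eq_zero.mp (h0 p hp)).symm

section Assignments

variable [DecidableEq X]

lemma kmCost_erase_le {D T : Finset X} {σ : X → X} (hσ : ∀ p ∈ D, σ p ∈ T) {o : X}
    (hT : (T.erase o).Nonempty) :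
    kmCost D (T.erase o)
      ≤ ∑ p ∈ D, dist p (σ p) + (cluster D σ o).card * dS o (T.erase o) := by
  obtain ⟨t, ht, hot⟩ := exists_mem_dS_eq_dist o hT
  have hp : ∀ p ∈ D, dS p (T.erase o)
      ≤ dist p (σ p) + if σ p = o then dS o (T.erase o) else 0 := by
    intro p hp
    split_ifs with hpo
    · rw [hpo, hot]
      exact (dS_le_dist ht).trans (dist_triangle p o t)
    · rw [add_zero]
      exact dS_le_dist (mem_erase.mpr ⟨hpo, hσ p hp⟩)
  calc kmCost D (T.erase o)
      ≤ ∑ p ∈ D, (dist p (σ p) + if σ p = o then dS o (T.erase o) else 0) := sum_le_sum hp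
    _ = _ := by rw [sum_add_distrib, ← sum_filter, sum_const, nsmul_eq_mul]; rfl

lemma mul_kmCost_le_card_cluster_mul_dS_erase {D F T : Finset X} {k : ℕ} {δ : ℝ}
    {σ : X → X} (hstable : (1 + δ) * kmOpt D F k ≤ kmOpt D F (k - 1)) (hk : 2 ≤ k)
    (hTF : T ⊆ F) (hTcard : T.card = k) (hTopt : kmCost D T = kmOpt D F k)
    (hσ : ∀ p ∈ D, σ p ∈ T ∧ dist p (σ p) = dS p T) {o : X} (ho : o ∈ T) :
    δ * kmCost D T ≤ (cluster D σ o).card * dS o (T.erase o) := by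
  have hcard : (T.erase o).card = k - 1 := by rw [card_erase_of_mem ho, hTcard]
  have hne : (T.erase o).Nonempty := card_pos.mp (by omega)
  have hlow : (1 + δ) * kmCost D T ≤ kmCost D (T.erase o) := by
    rw [hTopt]
    exact hstable.trans (kmOpt_le_kmCost ((erase_subset o T).trans hTF) hcard)
  have hup := kmCost_erase_le (fun p hp => (hσ p hp).1) hne
  rw [← kmCost_eq_sum_dist fun p hp => (hσ p hp).2] at hup
  linarith

lemma isPure_of_kmCost_eq_zero {D S T : Finset X} {σS σT : X → X} {ε : ℝ} (hε : 0 ≤ ε)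
    (hcard : T.card = S.card)
    (hσS : ∀ p ∈ D, σS p ∈ S ∧ dist p (σS p) = dS p S)
    (hσT : ∀ p ∈ D, σT p ∈ T ∧ dist p (σT p) = dS p T)
    (hS0 : kmCost D S = 0) (hT0 : kmCost D T = 0) {o : X} (ho : o ∈ T) :
    IsPure D S σS σT ε o := by
  have hfixS := eq_self_of_kmCost_eq_zero (fun p hp => (hσS p hp).2) hS0
  have hfixT := eq_self_of_kmCost_eq_zero (fun p hp => (hσT p hp).2) hT0
  have hDS : D ⊆ S := fun p hp => hfixS p hp ▸ (hσS p hp).1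
  have hDT : D ⊆ T := fun p hp => hfixT p hp ▸ (hσT p hp).1
  simp only [IsPure, cluster_eq_ite_of_eq_self hfixS, cluster_eq_ite_of_eq_self hfixT]
  by_cases hoD : o ∈ D
  · exact ⟨o, hDS hoD, by simp [hoD]; positivity⟩
  · obtain ⟨c, hcS, hcD⟩ : ∃ c ∈ S, c ∉ D := by
      by_contra! hSD
      have hSeq : S = D := Subset.antisymm hSD hDS
      exact hoD (eq_of_subset_of_card_le hDT (by rw [hcard, hSeq]) ▸ ho)
    exact ⟨c, hcS, by simp [hoD, hcD]⟩

noncomputable def near (S T : Finset X) (o : X) : Finset X :=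
  S.filter fun c => dist c o < dS o (T.erase o) / 2

lemma disjoint_near {S T : Finset X} {o o' : X} (ho : o ∈ T) (ho' : o' ∈ T) (hne : o ≠ o') :
    Disjoint (near S T o) (near S T o') := by
  rw [disjoint_left]
  intro c hc hc'
  have h1 := (mem_filter.mp hc).2
  have h2 := (mem_filter.mp hc').2
  have h3 : dS o (T.erase o) ≤ dist o o' := dS_le_dist (mem_erase.mpr ⟨hne.symm, ho'⟩)
  have h4 : dS o' (T.erase o') ≤ dist o' o := dS_le_dist (mem_erase.mpr ⟨hne, ho⟩)
  linarith [dist_triangle_left o o' c, dist_comm o o']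

lemma card_filter_two_le_card_near_le {S T : Finset X} (hST : S.card ≤ T.card) :
    #{o ∈ T | 2 ≤ (near S T o).card} ≤ #{o ∈ T | near S T o = ∅} := by
  have hsum : ∑ o ∈ T, (near S T o).card ≤ T.card := by
    rw [← card_biUnion fun o ho o' ho' hne => disjoint_near ho ho' hne]
    exact (card_le_card (biUnion_subset.mpr fun o _ => filter_subset _ _)).trans hST
  simpa only [card_eq_zero] using card_filter_two_le_le_card_filter_eq_zero T _ hsum

noncomputable def charged (D S T : Finset X) (σS σT : X → X) (o : X) : Finset X :=
  symmDiff (cluster D σT o) (D.filter fun p => σS p ∈ near S T o)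

lemma charged_subset {D S T : Finset X} {σS σT : X → X} {o : X} :
    charged D S T σS σT o ⊆ D :=
  symmDiff_subset_union.trans (union_subset (filter_subset _ _) (filter_subset _ _))

lemma half_dS_erase_le_of_mem_charged {D S T : Finset X} {σS σT : X → X}
    (hσS : ∀ p ∈ D, σS p ∈ S) (hσT : ∀ p ∈ D, σT p ∈ T) {o p : X}
    (hp : p ∈ charged D S T σS σT o) :
    dS o (T.erase o) / 2 ≤ dist p (σS p) + dist p (σT p) := by
  rcases mem_symmDiff.mp hp with ⟨hpA, hpN⟩ | ⟨hpN, hpA⟩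
  · obtain ⟨hpD, rfl⟩ := mem_filter.mp hpA
    have : dS (σT p) (T.erase (σT p)) / 2 ≤ dist (σS p) (σT p) := by
      by_contra! h
      exact hpN (mem_filter.mpr ⟨hpD, mem_filter.mpr ⟨hσS p hpD, h⟩⟩)
    linarith [dist_triangle_left (σS p) (σT p) p]
  · obtain ⟨hpD, hnear⟩ := mem_filter.mp hpN
    have hpo : σT p ≠ o := fun h => hpA (mem_filter.mpr ⟨hpD, h⟩)
    have h1 : dS o (T.erase o) ≤ dist o (σT p) :=
      dS_le_dist (mem_erase.mpr ⟨hpo, hσT p hpD⟩)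
    have h2 := (mem_filter.mp hnear).2
    linarith [dist_triangle4 o (σS p) p (σT p), dist_comm o (σS p), dist_comm (σS p) p]

lemma sum_sum_charged_le {D S T : Finset X} {σS σT : X → X} {w : X → ℝ}
    (hw : ∀ p ∈ D, 0 ≤ w p) :
    ∑ o ∈ T, ∑ p ∈ charged D S T σS σT o, w p ≤ 2 * ∑ p ∈ D, w p := by
  have hA : ∑ o ∈ T, ∑ p ∈ cluster D σT o, w p ≤ ∑ p ∈ D, w p :=
    sum_sum_le_sum_of_pairwiseDisjoint
      (fun o _ o' _ hne => disjoint_filter.mpr fun _ _ h h' => hne (h.symm.trans h'))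
      (fun o _ => filter_subset _ _) hw
  have hN :
      ∑ o ∈ T, ∑ p ∈ D.filter (fun p => σS p ∈ near S T o), w p ≤ ∑ p ∈ D, w p :=
    sum_sum_le_sum_of_pairwiseDisjoint
      (fun o ho o' ho' hne => disjoint_filter.mpr fun _ _ h h' =>
        disjoint_left.mp (disjoint_near ho ho' hne) h h')
      (fun o _ => filter_subset _ _) hw
  calc ∑ o ∈ T, ∑ p ∈ charged D S T σS σT o, w p
      ≤ ∑ o ∈ T, (∑ p ∈ cluster D σT o, w p
          + ∑ p ∈ D.filter (fun p => σS p ∈ near S T o), w p) :=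
        sum_le_sum fun o _ => sum_symmDiff_le_add fun p hp =>
          hw p (union_subset (filter_subset _ _) (filter_subset _ _) hp)
    _ ≤ 2 * ∑ p ∈ D, w p := by rw [sum_add_distrib]; linarith

lemma two_mul_card_cluster_le_card_charged_of_near_eq_empty {D S T : Finset X}
    {σS σT : X → X} {ε : ℝ} {o : X} (hε : ε ≤ 1 / 2) (h : near S T o = ∅) :
    2 * ε * (cluster D σT o).card ≤ (charged D S T σS σT o).card := by
  have : charged D S T σS σT o = cluster D σT o := by simp [charged, h]
  rw [this]
  nlinarith [Nat.cast_nonneg (α := ℝ) (cluster D σT o).card]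

lemma two_mul_card_cluster_le_card_charged_of_not_isPure {D S T : Finset X}
    {σS σT : X → X} {ε : ℝ} {o : X} (hε0 : 0 ≤ ε) (hε : ε ≤ 1 / 6)
    (hnp : ¬ IsPure D S σS σT ε o) (hle : (near S T o).card ≤ 1) :
    2 * ε * (cluster D σT o).card ≤ (charged D S T σS σT o).card := by
  rcases (near S T o).eq_empty_or_nonempty with h | hne
  · exact two_mul_card_cluster_le_card_charged_of_near_eq_empty (by linarith) h
  · obtain ⟨c, h⟩ := card_eq_one.mp (le_antisymm hle hne.card_pos)
    have hcS : c ∈ S := (mem_filter.mp (h ▸ mem_singleton_self c)).1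
    have : charged D S T σS σT o = symmDiff (cluster D σS c) (cluster D σT o) := by
      rw [charged, h, symmDiff_comm]
      simp only [mem_singleton]
      rfl
    rw [this]
    exact two_mul_card_le_card_symmDiff hε0 hε (not_le.mp fun hle => hnp ⟨c, hcS, hle⟩)

open scoped Classical in
lemma card_filter_not_isPure_le {D S T : Finset X} {σS σT : X → X} {ε : ℝ} (hε0 : 0 ≤ ε)
    (hε : ε ≤ 1 / 6) (hST : S.card ≤ T.card) :
    #{o ∈ T | ¬ IsPure D S σS σT ε o}
      ≤ 2 * #{o ∈ T | 2 * ε * (cluster D σT o).card ≤ (charged D S T σS σT o).card} := by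
  set E := T.filter fun o => 2 * ε * (cluster D σT o).card ≤ (charged D S T σS σT o).card
  have hNP : T.filter (fun o => ¬ IsPure D S σS σT ε o)
      ⊆ E ∪ T.filter fun o => 2 ≤ (near S T o).card := by
    intro o ho
    obtain ⟨hoT, hnp⟩ := mem_filter.mp ho
    by_cases h2 : 2 ≤ (near S T o).card
    · exact mem_union_right _ (mem_filter.mpr ⟨hoT, h2⟩)
    · exact mem_union_left _ (mem_filter.mpr ⟨hoT,
        two_mul_card_cluster_le_card_charged_of_not_isPure hε0 hε hnp (by omega)⟩)
  have hB : #{o ∈ T | 2 ≤ (near S T o).card} ≤ E.card :=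
    (card_filter_two_le_card_near_le hST).trans <| card_le_card <| monotone_filter_right _
      fun o _ h => two_mul_card_cluster_le_card_charged_of_near_eq_empty (by linarith) h
  have := (card_le_card hNP).trans (card_union_le _ _)
  omega

lemma card_mul_le_of_two_mul_card_cluster_le_card_charged {D F S T E : Finset X} {k : ℕ}
    {δ ε : ℝ} {σS σT : X → X} (hstable : (1 + δ) * kmOpt D F k ≤ kmOpt D F (k - 1))
    (hk : 2 ≤ k) (hTF : T ⊆ F) (hTcard : T.card = k) (hTopt : kmCost D T = kmOpt D F k)
    (hσS : ∀ p ∈ D, σS p ∈ S ∧ dist p (σS p) = dS p S)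
    (hσT : ∀ p ∈ D, σT p ∈ T ∧ dist p (σT p) = dS p T) (hε : 0 ≤ ε) (hET : E ⊆ T)
    (hE : ∀ o ∈ E, 2 * ε * (cluster D σT o).card ≤ (charged D S T σS σT o).card) :
    E.card * (ε * δ * kmCost D T) ≤ 2 * (kmCost D S + kmCost D T) := by
  set w : X → ℝ := fun p => dist p (σS p) + dist p (σT p)
  have hw : ∀ p ∈ D, 0 ≤ w p := fun p _ => add_nonneg dist_nonneg dist_nonneg
  have hsum : ∑ p ∈ D, w p = kmCost D S + kmCost D T := by
    rw [sum_add_distrib, kmCost_eq_sum_dist fun p hp => (hσS p hp).2,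
      kmCost_eq_sum_dist fun p hp => (hσT p hp).2]
  have hpay : ∀ o ∈ E, ε * δ * kmCost D T ≤ ∑ p ∈ charged D S T σS σT o, w p := by
    intro o ho
    have hr := mul_kmCost_le_card_cluster_mul_dS_erase hstable hk hTF hTcard hTopt hσT (hET ho)
    have hc := card_nsmul_le_sum (charged D S T σS σT o) w _ fun p hp =>
      half_dS_erase_le_of_mem_charged (fun p hp => (hσS p hp).1) (fun p hp => (hσT p hp).1) hp
    rw [nsmul_eq_mul] at hc
    have hr0 : 0 ≤ dS o (T.erase o) / 2 := by linarith [dS_nonneg o (T.erase o)]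
    calc ε * δ * kmCost D T ≤ ε * ((cluster D σT o).card * dS o (T.erase o)) := by
          rw [mul_assoc]; exact mul_le_mul_of_nonneg_left hr hε
      _ = 2 * ε * (cluster D σT o).card * (dS o (T.erase o) / 2) := by ring
      _ ≤ (charged D S T σS σT o).card * (dS o (T.erase o) / 2) :=
          mul_le_mul_of_nonneg_right (hE o ho) hr0
      _ ≤ _ := hc
  calc E.card * (ε * δ * kmCost D T)
      ≤ ∑ o ∈ E, ∑ p ∈ charged D S T σS σT o, w p := by
        rw [← nsmul_eq_mul]; exact card_nsmul_le_sum _ _ _ hpay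
    _ ≤ ∑ o ∈ T, ∑ p ∈ charged D S T σS σT o, w p :=
        sum_le_sum_of_subset_of_nonneg hET fun o _ _ =>
          sum_nonneg fun p hp => hw p (charged_subset hp)
    _ ≤ 2 * ∑ p ∈ D, w p := sum_sum_charged_le hw
    _ = _ := by rw [hsum]

end Assignments

end KMedian

open scoped Classical in
theorem stable_few_nonpure_clusters_general {X : Type*} [MetricSpace X] [DecidableEq X]
    (D F : Finset X) (hD3 : 3 ≤ D.card)
    (ε : ℝ) (hε0 : 0 < ε) (hε1 : ε ≤ 1 / 150)
    (k : ℕ) (hk2 : 2 ≤ k)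
    (hstable : (1 + ε / Real.log D.card) * kmOpt D F k ≤ kmOpt D F (k - 1))
    (OPT : Finset X) (hOPTF : OPT ⊆ F) (hOPTcard : OPT.card = k)
    (hOPTopt : kmCost D OPT = kmOpt D F k)
    (S : Finset X) (hScard : S.card = k)
    (hS5 : kmCost D S ≤ 5 * kmOpt D F k)
    (σO σS : X → X)
    (hσO : ∀ p ∈ D, σO p ∈ OPT ∧ dist p (σO p) = dS p OPT)
    (hσS : ∀ p ∈ D, σS p ∈ S ∧ dist p (σS p) = dS p S) :
    ((OPT.filter (fun o => ¬ IsPure D S σS σO ε o)).card : ℝ)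
      ≤ Real.log D.card / ε ^ 3 := by
  set L := Real.log D.card
  have hL : 0 < L := Real.log_pos (by exact_mod_cast (by omega : 1 < D.card))
  rw [← hOPTopt] at hS5
  rcases (kmCost_nonneg D OPT).eq_or_lt with hzero | hpos
  · have hS0 : kmCost D S = 0 := le_antisymm (by linarith) (kmCost_nonneg D S)
    rw [filter_false_of_mem fun o ho => not_not.mpr <| isPure_of_kmCost_eq_zero hε0.le
      (hOPTcard.trans hScard.symm) hσS hσO hS0 hzero.symm ho, card_empty, Nat.cast_zero]
    positivity
  set E := OPT.filter fun o => 2 * ε * (cluster D σO o).card ≤ (charged D S OPT σS σO o).card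
  have hE : E.card * (ε * (ε / L)) * kmCost D OPT ≤ 12 * kmCost D OPT := by
    have := card_mul_le_of_two_mul_card_cluster_le_card_charged hstable hk2 hOPTF hOPTcard
      hOPTopt hσS hσO hε0.le (filter_subset _ _) fun o ho => (mem_filter.mp ho).2
    linarith
  have hEcard : (E.card : ℝ) * ε ^ 2 ≤ 12 * L :=
    calc (E.card : ℝ) * ε ^ 2 = E.card * (ε * (ε / L)) * L := by field_simp
      _ ≤ 12 * L := by gcongr; exact le_of_mul_le_mul_right hE hpos
  have hNP : ((OPT.filter (fun o => ¬ IsPure D S σS σO ε o)).card : ℝ) ≤ 2 * E.card :=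
    mod_cast card_filter_not_isPure_le hε0.le (by linarith) (hScard.trans hOPTcard.symm).le
  rw [le_div_iff₀ (by positivity)]
  calc _ ≤ 2 * E.card * ε ^ 3 := by gcongr
    _ = 2 * (E.card * ε ^ 2) * ε := by ring
    _ ≤ 2 * (12 * L) * ε := by gcongr
    _ ≤ L := by nlinarith

open scoped Classical in
/-- In a stable instance, a good solution has few non-pure clusters: if the instance is
`(ε/ln n)`-stable, `OPT` is optimal with `|OPT| = k`, and `S` has `|S| = k` with
`cost(S) ≤ 5·opt_k`, then the number of centers of `OPT` whose cluster is not pure is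
at most `(ln n)/ε³`. -/
theorem stable_few_nonpure_clusters {X : Type*} [MetricSpace X] [DecidableEq X]
    (D F : Finset X) (hD3 : 3 ≤ D.card) (hF : F.Nonempty)
    (ε : ℝ) (hε0 : 0 < ε) (hε1 : ε ≤ 1 / 150)
    (k : ℕ) (hk2 : 2 ≤ k) (hkF : k ≤ F.card)
    (hstable : (1 + ε / Real.log D.card) * kmOpt D F k ≤ kmOpt D F (k - 1))
    (OPT : Finset X) (hOPTF : OPT ⊆ F) (hOPTcard : OPT.card = k)
    (hOPTopt : kmCost D OPT = kmOpt D F k)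
    (S : Finset X) (hSF : S ⊆ F) (hScard : S.card = k)
    (hS5 : kmCost D S ≤ 5 * kmOpt D F k)
    (σO σS : X → X)
    (hσO : ∀ p ∈ D, σO p ∈ OPT ∧ dist p (σO p) = dS p OPT)
    (hσS : ∀ p ∈ D, σS p ∈ S ∧ dist p (σS p) = dS p S) :
    ((OPT.filter (fun o => ¬ IsPure D S σS σO ε o)).card : ℝ)
      ≤ Real.log D.card / ε ^ 3 :=
  stable_few_nonpure_clusters_general D F hD3 ε hε0 hε1 k hk2 hstable OPT hOPTF hOPTcard hOPTopt S
    hScard hS5 σO σS hσO hσS
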